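/- arXiv:0912.4720 — 3 statements merged into one kernel-verified Lean document; each statement's English description precedes it below -/
import Mathlib

section
/- Let L > 0 and N ≥ 2. Let f : ℝ → ℝ be lower semicontinuous on [0, L/2], and convex and antitone (decreasing) on [0, L/2]. Then for every configuration x_1, …, x_N of (not necessarily distinct) points of the circle ℝ/Lℤ, the geodesic f-energy satisfies Σ_{j≠k} f(dist(x_j, x_k)) ≥ Σ_{j≠k} f(dist(z_j, z_k)), where z_j = j·(L/N) mod L are the N equally spaced points; i.e., equally spaced points globally minimize the geodesic f-energy. -/
/-!
Sort the points and lift them to `0 ≤ u₀ ≤ ⋯ ≤ u_{N-1} < L`. Writing the energy as a sum over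
index shifts `c ≠ 0`, the pairs `(j, j + c)` cut the circle into `N` gaps `a_j ∈ [0, L]`, with
`dist = min(a, L - a)` and total length `c L` (each gap that wraps around picks up an extra `L`).
Since `t ↦ f(min(t, L - t))` is convex on `[0, L]`, Jensen bounds the `c`-th sum below by
`N f(dist(0, cL/N))`, which is exactly the `c`-th sum for the equally spaced points.
-/

open Finset

/-- The geodesic `f`-energy of a configuration of `N` points on the circle `ℝ/Lℤ`:
the sum of `f` of the geodesic distances over all ordered pairs of distinct indices. -/
noncomputable def geodesicEnergy {N : ℕ} (L : ℝ) (f : ℝ → ℝ) (x : Fin N → AddCircle L) : ℝ :=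
  ∑ j : Fin N, ∑ k : Fin N, if j ≠ k then f (dist (x j) (x k)) else 0

section

variable {L : ℝ} {N : ℕ}

theorem geodesicEnergy_comp_perm (f : ℝ → ℝ) (x : Fin N → AddCircle L)
    (σ : Equiv.Perm (Fin N)) : geodesicEnergy L f (x ∘ σ) = geodesicEnergy L f x := by
  unfold geodesicEnergy
  refine Fintype.sum_equiv σ _ _ fun j => Fintype.sum_equiv σ _ _ fun k => ?_
  simp [σ.injective.ne_iff]

theorem geodesicEnergy_eq_sum_shift [NeZero N] (f : ℝ → ℝ) (x : Fin N → AddCircle L) :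
    geodesicEnergy L f x = ∑ c ∈ univ.erase 0, ∑ j, f (dist (x j) (x (j + c))) := by
  have (j : Fin N) : (∑ k, if j ≠ k then f (dist (x j) (x k)) else 0)
      = ∑ c, if c ≠ 0 then f (dist (x j) (x (j + c))) else 0 := by
    rw [← Equiv.sum_comp (Equiv.addLeft j)]
    simp
  simp_rw [geodesicEnergy, this, ← sum_filter, filter_ne', sum_comm (s := univ)]

theorem exists_perm_monotone_lift [Fact (0 < L)] (x : Fin N → AddCircle L) :
    ∃ σ : Equiv.Perm (Fin N), ∃ u : Fin N → ℝ, Monotone u ∧ (∀ j, u j ∈ Set.Ico 0 L) ∧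
      x ∘ σ = fun j => (u j : AddCircle L) := by
  set t : Fin N → ℝ := fun j => AddCircle.equivIco L 0 (x j)
  refine ⟨Tuple.sort t, t ∘ Tuple.sort t, Tuple.monotone_sort t, fun j => ?_, funext fun j => ?_⟩
  · simpa using (AddCircle.equivIco L 0 (x (Tuple.sort t j))).2
  · exact ((AddCircle.equivIco L 0).symm_apply_apply _).symm

theorem AddCircle.norm_coe_eq_min (hL : 0 < L) {t : ℝ} (ht : t ∈ Set.Icc 0 L) :
    ‖(t : AddCircle L)‖ = min t (L - t) := by
  obtain ⟨ht0, htL⟩ := ht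
  rcases le_total t (L / 2) with h | h
  · rw [min_eq_left (by linarith), (norm_coe_eq_abs_iff L hL.ne').2, abs_of_nonneg ht0]
    rwa [abs_of_nonneg ht0, abs_of_pos hL]
  · have : (t : AddCircle L) = (t - L : ℝ) := by rw [← coe_add_period L (t - L), sub_add_cancel]
    rw [min_eq_right (by linarith), this, (norm_coe_eq_abs_iff L hL.ne').2,
      abs_of_nonpos (by linarith), neg_sub]
    rw [abs_of_nonpos (by linarith), abs_of_pos hL]
    linarith

theorem image_Icc_min_sub_self : (fun t => min t (L - t)) '' Set.Icc 0 L = Set.Icc 0 (L / 2) := by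
  ext s
  constructor
  · rintro ⟨t, ⟨ht0, htL⟩, rfl⟩
    refine ⟨le_min ht0 (by linarith), ?_⟩
    rcases le_total t (L / 2) with h | h
    · exact (min_le_left _ _).trans h
    · exact (min_le_right _ _).trans (by linarith)
  · rintro ⟨hs0, hsL⟩
    exact ⟨s, ⟨hs0, by linarith⟩, min_eq_left (by linarith)⟩

theorem convexOn_comp_norm_coe (hL : 0 < L) {f : ℝ → ℝ}
    (hconv : ConvexOn ℝ (Set.Icc 0 (L / 2)) f) (hanti : AntitoneOn f (Set.Icc 0 (L / 2))) :
    ConvexOn ℝ (Set.Icc 0 L) fun t => f ‖(t : AddCircle L)‖ := by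
  have hmin : ConcaveOn ℝ (Set.Icc 0 L) fun t => min t (L - t) :=
    (concaveOn_id (convex_Icc 0 L)).inf
      ((concaveOn_const L (convex_Icc 0 L)).sub (convexOn_id (convex_Icc 0 L)))
  rw [← image_Icc_min_sub_self] at hconv hanti
  refine (hconv.comp_concaveOn hmin hanti).congr fun t ht => ?_
  simp [AddCircle.norm_coe_eq_min hL ht]

noncomputable def equallySpaced (L : ℝ) (N : ℕ) (j : Fin N) : AddCircle L :=
  (((j : ℕ) : ℝ) * (L / N) : ℝ)

theorem equallySpaced_add [NeZero N] (j c : Fin N) :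
    equallySpaced L N (j + c) = equallySpaced L N j + equallySpaced L N c := by
  have hN : (N : ℝ) ≠ 0 := Nat.cast_ne_zero.2 (NeZero.ne N)
  have hdiv := congrArg (Nat.cast (R := ℝ)) (Nat.mod_add_div ((j : ℕ) + c) N)
  push_cast at hdiv
  have : ((j : ℕ) + (c : ℕ) : ℝ) * (L / N)
      = (((j + c : Fin N) : ℕ) : ℝ) * (L / N) + (((j : ℕ) + c) / N : ℕ) • L := by
    rw [Fin.val_add, nsmul_eq_mul, ← hdiv]
    field_simp
  rw [equallySpaced, equallySpaced, equallySpaced, ← AddCircle.coe_add, ← add_mul, this,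
    AddCircle.coe_add, AddCircle.coe_nsmul, AddCircle.coe_period, smul_zero, add_zero]

theorem dist_equallySpaced_add [NeZero N] (j c : Fin N) :
    dist (equallySpaced L N j) (equallySpaced L N (j + c)) = ‖equallySpaced L N c‖ := by
  rw [equallySpaced_add, dist_self_add_right]

/-- For `u` sorted in `[0, L)`: the length of the positively oriented arc from `u j` to
`u (j + c)`; the index `j + c` wraps around exactly when this arc passes through `0`. -/
def cyclicGap (L : ℝ) (u : Fin N → ℝ) (c j : Fin N) : ℝ :=
  u (j + c) - u j + if (j : ℕ) + c < N then 0 else L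

theorem coe_cyclicGap (u : Fin N → ℝ) (c j : Fin N) :
    (cyclicGap L u c j : AddCircle L) = (u (j + c) - u j : ℝ) := by
  unfold cyclicGap
  split_ifs
  · rw [add_zero]
  · rw [AddCircle.coe_add_period]

theorem cyclicGap_mem_Icc {u : Fin N → ℝ} (hu : Monotone u) (huL : ∀ j, u j ∈ Set.Ico 0 L)
    (c j : Fin N) : cyclicGap L u c j ∈ Set.Icc 0 L := by
  obtain ⟨hj0, hjL⟩ := huL j
  obtain ⟨hjc0, hjcL⟩ := huL (j + c)
  unfold cyclicGap
  split_ifs with h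
  · have : u j ≤ u (j + c) := hu <| by rw [Fin.le_def, Fin.val_add, Nat.mod_eq_of_lt h]; omega
    constructor <;> linarith
  · have : u (j + c) ≤ u j := hu <| by
      rw [Fin.le_def, Fin.val_add, Nat.mod_eq_sub_mod (not_lt.1 h), Nat.mod_eq_of_lt (by omega)]
      omega
    constructor <;> linarith

theorem sum_ite_val_add_lt (c : Fin N) (a : ℝ) :
    ∑ j : Fin N, (if (j : ℕ) + c < N then 0 else a) = c * a := by
  rw [Fin.sum_univ_eq_sum_range (fun j => if j + (c : ℕ) < N then 0 else a), sum_ite,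
    sum_const_zero, zero_add, sum_const, nsmul_eq_mul]
  have : {j ∈ range N | ¬j + c < N} = Ico (N - c) N := by ext; simp; omega
  rw [this, Nat.card_Ico, Nat.sub_sub_self c.is_lt.le]

theorem sum_cyclicGap [NeZero N] (u : Fin N → ℝ) (c : Fin N) :
    ∑ j, cyclicGap L u c j = c * L := by
  have hshift : ∑ j, u (j + c) = ∑ j, u j := Equiv.sum_comp (Equiv.addRight c) u
  simp only [cyclicGap, sum_add_distrib, sum_sub_distrib, hshift, sum_ite_val_add_lt, sub_self,
    zero_add]

theorem sum_equallySpaced_shift_le [NeZero N] (hL : 0 < L) {f : ℝ → ℝ}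
    (hconv : ConvexOn ℝ (Set.Icc 0 (L / 2)) f) (hanti : AntitoneOn f (Set.Icc 0 (L / 2)))
    {u : Fin N → ℝ} (hu : Monotone u) (huL : ∀ j, u j ∈ Set.Ico 0 L) (c : Fin N) :
    ∑ j, f (dist (equallySpaced L N j) (equallySpaced L N (j + c)))
      ≤ ∑ j, f (dist (u j : AddCircle L) (u (j + c))) := by
  set g : ℝ → ℝ := fun t => f ‖(t : AddCircle L)‖
  have hN : (N : ℝ) ≠ 0 := Nat.cast_ne_zero.2 (NeZero.ne N)
  have hgap (j : Fin N) : f (dist (u j : AddCircle L) (u (j + c))) = g (cyclicGap L u c j) := by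
    rw [dist_comm, dist_eq_norm, ← AddCircle.coe_sub, ← coe_cyclicGap]
  have hmean : ∑ j, (N : ℝ)⁻¹ • cyclicGap L u c j = c * (L / N) := by
    rw [← smul_sum, sum_cyclicGap, smul_eq_mul]
    field_simp
  have hjensen := (convexOn_comp_norm_coe hL hconv hanti).map_sum_le (t := univ)
    (w := fun _ => (N : ℝ)⁻¹) (fun _ _ => by positivity) (by simp [hN])
    (fun j _ => cyclicGap_mem_Icc hu huL c j)
  rw [hmean, ← smul_sum, smul_eq_mul] at hjensen
  calc ∑ j, f (dist (equallySpaced L N j) (equallySpaced L N (j + c)))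
      = N * g (c * (L / N)) := by
        simp only [dist_equallySpaced_add, sum_const, card_univ, Fintype.card_fin, nsmul_eq_mul]
        rfl
    _ ≤ N * ((N : ℝ)⁻¹ * ∑ j, g (cyclicGap L u c j)) := by gcongr
    _ = ∑ j, f (dist (u j : AddCircle L) (u (j + c))) := by
      rw [← mul_assoc, mul_inv_cancel₀ hN, one_mul]
      exact sum_congr rfl fun j _ => (hgap j).symm

end

theorem equally_spaced_minimize_geodesic_energy_general
    (L : ℝ) (hL : 0 < L) (N : ℕ) (f : ℝ → ℝ)
    (hconv : ConvexOn ℝ (Set.Icc 0 (L / 2)) f)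
    (hanti : AntitoneOn f (Set.Icc 0 (L / 2)))
    (x : Fin N → AddCircle L) :
    geodesicEnergy L f (fun j : Fin N => (((j : ℕ) : ℝ) * (L / N) : ℝ))
      ≤ geodesicEnergy L f x := by
  obtain rfl | hN := eq_or_ne N 0
  · simp [geodesicEnergy]
  have : NeZero N := ⟨hN⟩
  have : Fact (0 < L) := ⟨hL⟩
  obtain ⟨σ, u, hu, huL, hxσ⟩ := exists_perm_monotone_lift x
  rw [← geodesicEnergy_comp_perm f x σ, hxσ]
  change geodesicEnergy L f (equallySpaced L N) ≤ _
  rw [geodesicEnergy_eq_sum_shift, geodesicEnergy_eq_sum_shift]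
  exact sum_le_sum fun c _ => sum_equallySpaced_shift_le hL hconv hanti hu huL c

/-- **Optimality of equally spaced points** (Proposition 1 (A), existence part):
if `f` is lower semicontinuous on `[0, L/2]` and convex and antitone there, then the
`N` equally spaced points `z_j = j·(L/N) mod L` minimize the geodesic `f`-energy among
all `N`-point configurations on the circle `ℝ/Lℤ`. -/
theorem equally_spaced_minimize_geodesic_energy
    (L : ℝ) (hL : 0 < L) (N : ℕ) (hN : 2 ≤ N) (f : ℝ → ℝ)
    (hlsc : LowerSemicontinuousOn f (Set.Icc 0 (L / 2)))
    (hconv : ConvexOn ℝ (Set.Icc 0 (L / 2)) f)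
    (hanti : AntitoneOn f (Set.Icc 0 (L / 2)))
    (x : Fin N → AddCircle L) :
    geodesicEnergy L f (fun j : Fin N => (((j : ℕ) : ℝ) * (L / N) : ℝ))
      ≤ geodesicEnergy L f x :=
  equally_spaced_minimize_geodesic_energy_general L hL N f hconv hanti x
end

section
/- Let L > 0 and N = 2M + κ ≥ 2 with κ ∈ {0,1}. Let f : ℝ → ℝ be antitone and concave on [0, L/2]. Then for every configuration x_1, …, x_N of points of ℝ/Lℤ, Σ_{j≠k} f(dist(x_j, x_k)) ≥ (N(N−1) − 2M(M+κ))·f(0) + 2M(M+κ)·f(L/2), and this lower bound is attained by any antipodal configuration consisting of M+κ copies of a point p and M copies of a point q with dist(p,q) = L/2. -/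
/-!
The geodesic distance on `ℝ/Lℤ` is a cut metric: if `A x` is the open arc of length `L/2`
centred at `x` (the ball of radius `L/4`), then `|A x ∩ A y| = L/2 - dist x y`. Hence
`∑ⱼ ∑ₖ (L/2 - dist (x j) (x k)) = ∫ h²`, where `h t` counts the arcs containing `t`, and since
`∫ h = N L / 2` and `h (N - h) ≤ M (M + κ)` for every integer `h`, the sum of all pairwise
distances is at most `M (M + κ) L`. Bounding the concave `f` from below by its chord on
`[0, L/2]` (whose slope is `≤ 0` as `f` is antitone) turns this into the energy bound. In the
antipodal configuration every distance is `0` or `L/2`, so the chord bound is sharp there, and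
exactly `2 M (M + κ)` ordered pairs are at distance `L/2`.
-/

open Finset

open MeasureTheory Metric Set

theorem ConcaveOn.secant_le {f : ℝ → ℝ} {a b t : ℝ} (hf : ConcaveOn ℝ (Icc a b) f)
    (hab : a < b) (ht : t ∈ Icc a b) :
    f a + (f b - f a) / (b - a) * (t - a) ≤ f t := by
  have hθ₀ : 0 ≤ (t - a) / (b - a) := div_nonneg (by linarith [ht.1]) (by linarith)
  have hθ₁ : (t - a) / (b - a) ≤ 1 := (div_le_one (by linarith)).2 (by linarith [ht.2])
  have key := hf.2 (left_mem_Icc.2 hab.le) (right_mem_Icc.2 hab.le) (sub_nonneg.2 hθ₁) hθ₀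
    (sub_add_cancel _ _)
  have hba : b - a ≠ 0 := sub_ne_zero.2 hab.ne'
  have hcomb : (1 - (t - a) / (b - a)) • a + ((t - a) / (b - a)) • b = t := by
    simp only [smul_eq_mul]; field_simp; ring
  have hchord : (1 - (t - a) / (b - a)) • f a + ((t - a) / (b - a)) • f b =
      f a + (f b - f a) / (b - a) * (t - a) := by
    simp only [smul_eq_mul]; field_simp; ring
  rwa [hcomb, hchord] at key

theorem natCast_mul_sub_le (n : ℕ) {M κ : ℕ} (hκ : κ ≤ 1) :
    (n : ℝ) * (2 * M + κ - n) ≤ M * (M + κ) := by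
  have hκ' : (κ : ℝ) ≤ 1 := by exact_mod_cast hκ
  rcases le_or_gt n M with hn | hn
  · have hn' : (n : ℝ) ≤ M := by exact_mod_cast hn
    nlinarith [sq_nonneg ((M : ℝ) - n),
      mul_nonneg (Nat.cast_nonneg κ : (0 : ℝ) ≤ κ) (sub_nonneg.2 hn')]
  · have hn' : (M : ℝ) + 1 ≤ n := by exact_mod_cast hn
    nlinarith [mul_nonneg (by linarith : (0 : ℝ) ≤ n - M) (by linarith : (0 : ℝ) ≤ n - M - κ)]

theorem card_mul_sum_measureReal_sub_le_sum_sum_measureReal_inter {α ι : Type*}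
    [MeasurableSpace α] {μ : Measure α} [IsFiniteMeasure μ] [Fintype ι] {M κ : ℕ}
    (hκ : κ ≤ 1) (hcard : Fintype.card ι = 2 * M + κ) {S : ι → Set α}
    (hS : ∀ i, MeasurableSet (S i)) :
    Fintype.card ι * ∑ i, μ.real (S i) - M * (M + κ) * μ.real univ ≤
      ∑ i, ∑ j, μ.real (S i ∩ S j) := by
  classical
  set h : α → ℝ := fun t => ∑ i, (S i).indicator 1 t
  have hint : ∀ i, Integrable ((S i).indicator (1 : α → ℝ)) μ :=
    fun i => (integrable_const 1).indicator (hS i)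
  have hint₂ : ∀ i j, Integrable ((S i ∩ S j).indicator (1 : α → ℝ)) μ :=
    fun i j => (integrable_const 1).indicator ((hS i).inter (hS j))
  have hpointwise : ∀ t, (Fintype.card ι : ℝ) * h t - M * (M + κ) ≤
      ∑ i, ∑ j, (S i ∩ S j).indicator 1 t := by
    intro t
    have hh : h t = (#{i | t ∈ S i} : ℕ) := by
      simp [h, Set.indicator_apply, Finset.sum_boole]
    have hsq : ∑ i, ∑ j, (S i ∩ S j).indicator (1 : α → ℝ) t = h t * h t := by
      simp [h, Set.inter_indicator_one, Finset.sum_mul_sum]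
    rw [hsq, hcard, hh]
    push_cast
    nlinarith [natCast_mul_sub_le (M := M) (#{i | t ∈ S i}) hκ]
  calc (Fintype.card ι : ℝ) * ∑ i, μ.real (S i) - M * (M + κ) * μ.real univ
      = ∫ t, ((Fintype.card ι : ℝ) * h t - M * (M + κ)) ∂μ := by
        rw [integral_sub ((integrable_finsetSum _ fun i _ => hint i).const_mul _)
          (integrable_const _), integral_const_mul, integral_finsetSum _ fun i _ => hint i]
        simp [integral_indicator_one (hS _), mul_comm]
    _ ≤ ∫ t, ∑ i, ∑ j, (S i ∩ S j).indicator 1 t ∂μ :=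
        integral_mono (((integrable_finsetSum _ fun i _ => hint i).const_mul _).sub
          (integrable_const _))
          (integrable_finsetSum _ fun i _ => integrable_finsetSum _ fun j _ => hint₂ i j) hpointwise
    _ = ∑ i, ∑ j, μ.real (S i ∩ S j) := by
        rw [integral_finsetSum _ fun i _ => integrable_finsetSum _ fun j _ => hint₂ i j]
        simp_rw [integral_finsetSum _ fun j _ => hint₂ _ j,
          integral_indicator_one ((hS _).inter (hS _))]

namespace AddCircle

variable {L : ℝ}

theorem min_abs_le_norm_coe (hL : 0 < L) (u : ℝ) : min |u| (L - |u|) ≤ ‖(u : AddCircle L)‖ := by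
  rw [norm_eq]
  rcases eq_or_ne (round (L⁻¹ * u)) 0 with hn | hn
  · simp [hn]
  · have hn1 : (1 : ℝ) ≤ |(round (L⁻¹ * u) : ℝ)| := by exact_mod_cast Int.one_le_abs hn
    refine min_le_of_right_le ?_
    calc L - |u| ≤ |(round (L⁻¹ * u) : ℝ)| * L - |u| := by nlinarith
      _ = |round (L⁻¹ * u) * L| - |u| := by rw [abs_mul, abs_of_pos hL]
      _ ≤ |u - round (L⁻¹ * u) * L| := by
        rw [abs_sub_comm u]; exact abs_sub_abs_le_abs_sub _ _

theorem norm_coe_lt_iff_abs_lt (hL : 0 < L) {r u : ℝ} (hu : |u| ≤ L - r) :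
    ‖(u : AddCircle L)‖ < r ↔ |u| < r := by
  refine ⟨fun h => ?_, fun h => QuotientAddGroup.norm_mk_le_norm.trans_lt h⟩
  rcases min_lt_iff.1 ((min_abs_le_norm_coe hL u).trans_lt h) with h | h
  · exact h
  · linarith

theorem exists_abs_le_half_period_coe_eq (hL : 0 < L) (c : AddCircle L) :
    ∃ s : ℝ, |s| ≤ L / 2 ∧ (s : AddCircle L) = c := by
  have : Fact (0 < L) := ⟨hL⟩
  obtain ⟨hs₁, hs₂⟩ := (equivIoc L (-(L / 2)) c).2
  exact ⟨_, abs_le.2 ⟨hs₁.le, by linarith⟩, (equivIoc L _).symm_apply_apply c⟩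

theorem volume_ball_inter_ball [Fact (0 < L)] {r : ℝ} (hr : r ≤ L / 4) (x y : AddCircle L) :
    volume (ball x r ∩ ball y r) = ENNReal.ofReal (2 * r - dist x y) := by
  have hL : 0 < L := Fact.out
  have htrans : (x + ·) ⁻¹' (ball x r ∩ ball y r) = ball 0 r ∩ ball (y - x) r := by
    simp [preimage_add_ball]
  rw [← measure_preimage_add volume x, htrans, dist_comm, dist_eq_norm]
  obtain ⟨s, hs, hsc⟩ := exists_abs_le_half_period_coe_eq hL (y - x)
  -- Since `r ≤ L / 4`, neither ball wraps around on the fundamental domain `(-L/2, L/2]`.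
  have hlift : QuotientAddGroup.mk ⁻¹' (ball (0 : AddCircle L) r ∩ ball (s : AddCircle L) r) ∩
      Ioc (-(L / 2)) (-(L / 2) + L) = ball 0 r ∩ ball s r := by
    ext t
    simp only [Set.mem_inter_iff, Set.mem_preimage, mem_ball, Set.mem_Ioc, dist_eq_norm,
      sub_zero, Real.norm_eq_abs, ← QuotientAddGroup.mk_sub]
    constructor
    · rintro ⟨⟨ht, hts⟩, ht₁, ht₂⟩
      have ht' : |t| < r := (norm_coe_lt_iff_abs_lt hL (abs_le.2 ⟨by linarith, by linarith⟩)).1 ht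
      have hts' := (norm_coe_lt_iff_abs_lt hL (u := t - s) (by
        rw [abs_lt] at ht'; rw [abs_le] at hs ⊢; constructor <;> linarith)).1 hts
      exact ⟨ht', hts'⟩
    · rintro ⟨ht, hts⟩
      refine ⟨⟨QuotientAddGroup.norm_mk_le_norm.trans_lt ht,
        QuotientAddGroup.norm_mk_le_norm.trans_lt hts⟩, ?_, ?_⟩ <;>
      · rw [abs_lt] at ht; linarith
  rw [← hsc,
    add_projection_respects_measure L (-(L / 2)) (measurableSet_ball.inter measurableSet_ball),
    hlift, Real.ball_eq_Ioo, Real.ball_eq_Ioo, Ioo_inter_Ioo, Real.volume_Ioo,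
    (norm_coe_eq_abs_iff L hL.ne').2 (by rwa [abs_of_pos hL])]
  congr 1
  rcases le_total 0 s with h | h
  · rw [abs_of_nonneg h, max_eq_right (by linarith), min_eq_left (by linarith)]; ring
  · rw [abs_of_nonpos h, max_eq_left (by linarith), min_eq_right (by linarith)]; ring

theorem dist_le_half_period (hL : 0 < L) (x y : AddCircle L) : dist x y ≤ L / 2 := by
  simpa [dist_eq_norm, abs_of_pos hL] using norm_le_half_period L hL.ne' (x := x - y)

theorem measureReal_ball_inter_ball_quarter_period [Fact (0 < L)] (x y : AddCircle L) :
    volume.real (ball x (L / 4) ∩ ball y (L / 4)) = L / 2 - dist x y := by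
  rw [measureReal_def, volume_ball_inter_ball le_rfl,
    ENNReal.toReal_ofReal (by linarith [dist_le_half_period Fact.out x y])]
  ring

theorem sum_sum_dist_le {ι : Type*} [Fintype ι] (hL : 0 < L) {M κ : ℕ} (hκ : κ ≤ 1)
    (hcard : Fintype.card ι = 2 * M + κ) (x : ι → AddCircle L) :
    ∑ i, ∑ j, dist (x i) (x j) ≤ M * (M + κ) * L := by
  have : Fact (0 < L) := ⟨hL⟩
  have key := card_mul_sum_measureReal_sub_le_sum_sum_measureReal_inter (μ := volume) hκ hcard
    (S := fun i => ball (x i) (L / 4)) fun _ => measurableSet_ball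
  have hball (y : AddCircle L) : volume.real (ball y (L / 4)) = L / 2 := by
    simpa using measureReal_ball_inter_ball_quarter_period y y
  have huniv : volume.real (univ : Set (AddCircle L)) = L := by
    simp [measureReal_def, hL.le]
  simp only [measureReal_ball_inter_ball_quarter_period, hball, huniv,
    Finset.sum_sub_distrib, Finset.sum_const, Finset.card_univ, hcard, nsmul_eq_mul] at key
  push_cast at key
  linarith

end AddCircle

theorem geodesicEnergy_eq_sum_sum_sub {N : ℕ} (L : ℝ) (f : ℝ → ℝ) (x : Fin N → AddCircle L) :
    geodesicEnergy L f x = ∑ j, ∑ k, f (dist (x j) (x k)) - N * f 0 := by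
  have hrow (j : Fin N) : ∑ k, (if j ≠ k then f (dist (x j) (x k)) else 0) =
      ∑ k, f (dist (x j) (x k)) - f 0 := by
    rw [← Finset.sum_filter, Finset.filter_ne, Finset.sum_erase_eq_sub (Finset.mem_univ j),
      dist_self]
  simp only [geodesicEnergy, hrow, Finset.sum_sub_distrib, Finset.sum_const, Finset.card_univ,
    Fintype.card_fin, nsmul_eq_mul]

theorem le_geodesicEnergy {L : ℝ} (hL : 0 < L) {N M κ : ℕ} (hκ : κ ≤ 1) (hNM : N = 2 * M + κ)
    {f : ℝ → ℝ} (hf : f (L / 2) ≤ f 0) (hconc : ConcaveOn ℝ (Icc 0 (L / 2)) f)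
    (x : Fin N → AddCircle L) :
    ((N : ℝ) * (N - 1) - 2 * M * (M + κ)) * f 0 + 2 * M * (M + κ) * f (L / 2) ≤
      geodesicEnergy L f x := by
  set c := (f (L / 2) - f 0) / (L / 2)
  have hc : c ≤ 0 := div_nonpos_of_nonpos_of_nonneg (by linarith) (by linarith)
  have hcL : c * L = 2 * (f (L / 2) - f 0) := by simp only [c]; field_simp
  have hchord (j k : Fin N) : f 0 + c * dist (x j) (x k) ≤ f (dist (x j) (x k)) := by
    simpa using hconc.secant_le (by linarith)
      ⟨dist_nonneg, AddCircle.dist_le_half_period hL (x j) (x k)⟩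
  have hdist : c * (M * (M + κ) * L) ≤ c * ∑ j, ∑ k, dist (x j) (x k) :=
    mul_le_mul_of_nonpos_left (AddCircle.sum_sum_dist_le hL hκ (by simpa using hNM) x) hc
  have hN : (N : ℝ) = 2 * M + κ := by rw [hNM]; push_cast; ring
  calc ((N : ℝ) * (N - 1) - 2 * M * (M + κ)) * f 0 + 2 * M * (M + κ) * f (L / 2)
      = N * N * f 0 + c * (M * (M + κ) * L) - N * f 0 := by
        rw [hN]; linear_combination (-(M : ℝ) * (M + κ)) * hcL
    _ ≤ ∑ j, ∑ k, (f 0 + c * dist (x j) (x k)) - N * f 0 := by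
        simp only [Finset.sum_add_distrib, Finset.sum_const, ← Finset.mul_sum, Finset.card_univ,
          Fintype.card_fin, nsmul_eq_mul]
        linarith
    _ ≤ ∑ j, ∑ k, f (dist (x j) (x k)) - N * f 0 := by
        gcongr with j _ k _; exact hchord j k
    _ = geodesicEnergy L f x := (geodesicEnergy_eq_sum_sum_sub L f x).symm

theorem sum_apply_ite_eq_card_mul_add {ι α : Type*} [Fintype ι] (P : ι → Prop)
    [DecidablePred P] (g : α → ℝ) (p q : α) :
    ∑ k, g (if P k then p else q) = #{k | P k} * g p + #{k | ¬P k} * g q := by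
  simp [Finset.sum_apply_ite]

theorem geodesicEnergy_antipodal {L : ℝ} {N M κ : ℕ} (hNM : N = 2 * M + κ) (f : ℝ → ℝ)
    {p q : AddCircle L} (hpq : dist p q = L / 2) :
    geodesicEnergy L f (fun j : Fin N => if (j : ℕ) < M + κ then p else q) =
      ((N : ℝ) * (N - 1) - 2 * M * (M + κ)) * f 0 + 2 * M * (M + κ) * f (L / 2) := by
  have hlow : #{j : Fin N | (j : ℕ) < M + κ} = M + κ := by
    rw [Fin.card_filter_val_lt]; omega
  have hhigh : #{j : Fin N | ¬(j : ℕ) < M + κ} = M := by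
    have := Finset.card_filter_add_card_filter_not (s := univ) fun j : Fin N => (j : ℕ) < M + κ
    simp only [Finset.card_univ, Fintype.card_fin] at this
    omega
  have hN : (N : ℝ) = 2 * M + κ := by rw [hNM]; push_cast; ring
  rw [geodesicEnergy_eq_sum_sum_sub,
    sum_apply_ite_eq_card_mul_add _
      (fun z => ∑ k : Fin N, f (dist z (if (k : ℕ) < M + κ then p else q))),
    sum_apply_ite_eq_card_mul_add _ (fun z => f (dist p z)),
    sum_apply_ite_eq_card_mul_add _ (fun z => f (dist q z)), hlow, hhigh, dist_self, dist_self,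
    hpq, dist_comm q p, hpq, hN]
  push_cast
  ring

theorem antipodal_minimize_geodesic_energy_general
    (L : ℝ) (hL : 0 < L) (N M κ : ℕ) (hκ : κ = 0 ∨ κ = 1) (hNM : N = 2 * M + κ)
    (f : ℝ → ℝ)
    (hanti : AntitoneOn f (Set.Icc 0 (L / 2)))
    (hconc : ConcaveOn ℝ (Set.Icc 0 (L / 2)) f) :
    (∀ x : Fin N → AddCircle L,
      ((N : ℝ) * ((N : ℝ) - 1) - 2 * (M : ℝ) * ((M : ℝ) + (κ : ℝ))) * f 0
          + 2 * (M : ℝ) * ((M : ℝ) + (κ : ℝ)) * f (L / 2)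
        ≤ geodesicEnergy L f x) ∧
    (∀ p q : AddCircle L, dist p q = L / 2 →
      geodesicEnergy L f (fun j : Fin N => if (j : ℕ) < M + κ then p else q)
        = ((N : ℝ) * ((N : ℝ) - 1) - 2 * (M : ℝ) * ((M : ℝ) + (κ : ℝ))) * f 0
          + 2 * (M : ℝ) * ((M : ℝ) + (κ : ℝ)) * f (L / 2)) := by
  have hκ' : κ ≤ 1 := by omega
  have hf : f (L / 2) ≤ f 0 := hanti ⟨le_rfl, by linarith⟩ ⟨by linarith, le_rfl⟩ (by linarith)
  exact ⟨le_geodesicEnergy hL hκ' hNM hf hconc, fun p q hpq => geodesicEnergy_antipodal hNM f hpq⟩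

/-- **Optimality of antipodal configurations for concave kernels** (Proposition 1 (B)):
for `f` antitone and concave on `[0, L/2]` and `N = 2M + κ` (`κ ∈ {0,1}`), every `N`-point
configuration on `ℝ/Lℤ` has geodesic `f`-energy at least
`(N(N−1) − 2M(M+κ))·f(0) + 2M(M+κ)·f(L/2)`, and this bound is attained by any antipodal
configuration consisting of `M+κ` copies of a point `p` and `M` copies of a point `q` with
`dist p q = L/2`. -/
theorem antipodal_minimize_geodesic_energy
    (L : ℝ) (hL : 0 < L) (N M κ : ℕ) (hκ : κ = 0 ∨ κ = 1) (hNM : N = 2 * M + κ)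
    (hN : 2 ≤ N) (f : ℝ → ℝ)
    (hanti : AntitoneOn f (Set.Icc 0 (L / 2)))
    (hconc : ConcaveOn ℝ (Set.Icc 0 (L / 2)) f) :
    (∀ x : Fin N → AddCircle L,
      ((N : ℝ) * ((N : ℝ) - 1) - 2 * (M : ℝ) * ((M : ℝ) + (κ : ℝ))) * f 0
          + 2 * (M : ℝ) * ((M : ℝ) + (κ : ℝ)) * f (L / 2)
        ≤ geodesicEnergy L f x) ∧
    (∀ p q : AddCircle L, dist p q = L / 2 →
      geodesicEnergy L f (fun j : Fin N => if (j : ℕ) < M + κ then p else q)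
        = ((N : ℝ) * ((N : ℝ) - 1) - 2 * (M : ℝ) * ((M : ℝ) + (κ : ℝ))) * f 0
          + 2 * (M : ℝ) * ((M : ℝ) + (κ : ℝ)) * f (L / 2)) :=
  antipodal_minimize_geodesic_energy_general L hL N M κ hκ hNM f hanti hconc
end

section
/- Let L > 0, let p ≥ 1 be an integer, and let N = 2M + κ ≥ 2 with κ ∈ {0,1}. Then the geodesic Riesz (−p)-energy of the N equally spaced points z_j = j·(L/N) mod L on ℝ/Lℤ satisfies the exact identity Σ_{j≠k} dist(z_j,z_k)^p = [(L/2)^p/(p+1)]·N² + [(L/2)^p/(p+1)]·Σ_{n=1}^{⌊p/2⌋} C(p+1, 2n)·B_{2n}(κ/2)·2^{2n}·N^{2−2n} + [2L^p/(p+1)]·(B_{p+1}(κ/2) − B_{p+1})·N^{1−p}, and the last term vanishes when p is even. -/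
open Finset

/-!
Reindexing by `d = j - k`, the distance from `z_j` to `z_k` is `(L/N) · min d (N - d)`, so the
energy is `N (L/N)^p (∑_{k < M+κ} k^p + ∑_{k ≤ M} k^p)`. By Faulhaber's formula, `p + 1` times the
bracket is `B_{p+1}(κ/2 + N/2) + B_{p+1}(1 - κ/2 + N/2) - 2 B_{p+1}`. Expanding both values with the
addition theorem `B_n(x + y) = ∑ C(n,k) B_k(x) y^(n-k)` and the reflection `B_k(1 - x) = (-1)^k B_k(x)`
cancels the odd `k`; the top term `(1 + (-1)^(p+1)) B_{p+1}(κ/2)` equals `2 B_{p+1}(κ/2)` because the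
odd Bernoulli polynomials vanish at `0` (beyond `B_1`) and at `1/2`.
-/

namespace Polynomial

section Algebra

variable {A : Type*} [CommRing A] [Algebra ℚ A]

theorem aeval_bernoulli (n : ℕ) (x : A) :
    aeval x (bernoulli n) =
      ∑ i ∈ range (n + 1), algebraMap ℚ A (_root_.bernoulli i * n.choose i) * x ^ (n - i) := by
  simp only [bernoulli, map_sum, aeval_monomial]

theorem aeval_add_bernoulli (n : ℕ) (x y : A) :
    aeval (x + y) (bernoulli n) =
      ∑ k ∈ range (n + 1), (n.choose k : A) * aeval x (bernoulli k) * y ^ (n - k) := by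
  simp_rw [aeval_bernoulli, mul_sum, sum_mul, range_eq_Ico]
  rw [← sum_Ico_Ico_comm]
  refine sum_congr rfl fun i hi ↦ ?_
  rw [mem_Ico] at hi
  rw [add_pow, mul_sum, sum_Ico_eq_sum_range, show n + 1 - i = n - i + 1 by omega]
  refine sum_congr rfl fun j hj ↦ ?_
  rw [mem_range] at hj
  have hchoose : (n.choose (i + j) : ℚ) * (i + j).choose i = n.choose i * (n - i).choose j := by
    have := Nat.choose_mul (n := n) (k := i + j) (s := i) (by omega)
    rw [Nat.add_sub_cancel_left] at this
    exact_mod_cast this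
  rw [Nat.add_sub_cancel_left, show n - (i + j) = n - i - j by omega]
  have := congrArg (algebraMap ℚ A) (congrArg (_root_.bernoulli i * ·) hchoose)
  simp only [map_mul, map_natCast] at this ⊢
  linear_combination -(x ^ j * y ^ (n - i - j) * this)

theorem aeval_one_sub_bernoulli (n : ℕ) (x : A) :
    aeval (1 - x) (bernoulli n) = (-1) ^ n * aeval x (bernoulli n) := by
  simpa [aeval_comp] using congrArg (aeval x) (bernoulli_comp_one_sub_X n)

theorem sum_range_pow_eq_aeval_bernoulli_sub (n p : ℕ) :
    ((p : A) + 1) * ∑ k ∈ range n, (k : A) ^ p =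
      aeval (n : A) (bernoulli (p + 1)) - algebraMap ℚ A (_root_.bernoulli (p + 1)) := by
  rw [← map_natCast (algebraMap ℚ A) n, aeval_algebraMap_apply_eq_algebraMap_eval, ← map_sub,
    ← Nat.succ_eq_add_one, ← sum_range_pow_eq_bernoulli_sub]
  simp

end Algebra

section HalfInteger

variable {κ n : ℕ}

theorem aeval_one_sub_half_bernoulli (hκ : κ = 0 ∨ κ = 1) (hn : n ≠ 1) :
    aeval (1 - (κ : ℝ) / 2) (bernoulli n) = aeval ((κ : ℝ) / 2) (bernoulli n) := by
  rcases hκ with rfl | rfl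
  · have h1 := congrArg (algebraMap ℚ ℝ) (bernoulli_eval_one n)
    have h0 := congrArg (algebraMap ℚ ℝ) (bernoulli_eval_zero n)
    rw [← aeval_algebraMap_apply_eq_algebraMap_eval] at h1 h0
    simp only [map_one, map_zero] at h1 h0
    simp [h1, h0, bernoulli_eq_bernoulli'_of_ne_one hn]
  · norm_num

theorem neg_one_pow_mul_aeval_half_bernoulli (hκ : κ = 0 ∨ κ = 1) (hn : n ≠ 1) :
    (-1) ^ n * aeval ((κ : ℝ) / 2) (bernoulli n) = aeval ((κ : ℝ) / 2) (bernoulli n) := by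
  rw [← aeval_one_sub_bernoulli, aeval_one_sub_half_bernoulli hκ hn]

theorem aeval_half_bernoulli_of_odd (hκ : κ = 0 ∨ κ = 1) (hn : Odd n) (h1 : n ≠ 1) :
    aeval ((κ : ℝ) / 2) (bernoulli n) = 0 := by
  have h := neg_one_pow_mul_aeval_half_bernoulli hκ h1
  rw [hn.neg_one_pow] at h
  linarith

end HalfInteger

end Polynomial

theorem sum_range_succ_mul_one_add_neg_one_pow {R : Type*} [CommRing R] (f : ℕ → R) (n : ℕ) :
    ∑ k ∈ range (n + 1), f k * (1 + (-1) ^ k) = 2 * ∑ m ∈ range (n / 2 + 1), f (2 * m) := by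
  induction n with
  | zero => simp; ring
  | succ n ih =>
    rw [sum_range_succ, ih]
    rcases Nat.even_or_odd (n + 1) with ⟨t, ht⟩ | ⟨t, ht⟩
    · rw [show (n + 1) / 2 = n / 2 + 1 by omega, sum_range_succ _ (n / 2 + 1),
        show 2 * (n / 2 + 1) = n + 1 by omega, Even.neg_one_pow ⟨t, ht⟩]
      ring
    · rw [show (n + 1) / 2 = n / 2 by omega, Odd.neg_one_pow ⟨t, ht⟩]
      ring

section PowerSums

open Polynomial

theorem sum_range_pow_add_sum_range_pow {p M κ : ℕ} (hp : p ≠ 0) (hκ : κ = 0 ∨ κ = 1) :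
    ((p : ℝ) + 1) * (∑ k ∈ range (M + κ), (k : ℝ) ^ p + ∑ k ∈ range (M + 1), (k : ℝ) ^ p) =
      2 * ∑ m ∈ range (p / 2 + 1), ((p + 1).choose (2 * m) : ℝ) *
          aeval ((κ : ℝ) / 2) (bernoulli (2 * m)) * (((2 * M + κ : ℕ) : ℝ) / 2) ^ (p + 1 - 2 * m)
        + 2 * (aeval ((κ : ℝ) / 2) (bernoulli (p + 1)) - (_root_.bernoulli (p + 1) : ℝ)) := by
  set a : ℝ := (κ : ℝ) / 2
  set y : ℝ := ((2 * M + κ : ℕ) : ℝ) / 2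
  have hlow : ((M + κ : ℕ) : ℝ) = a + y := by simp only [a, y]; push_cast; ring
  have hhigh : ((M + 1 : ℕ) : ℝ) = (1 - a) + y := by simp only [a, y]; push_cast; ring
  set g : ℕ → ℝ := fun k ↦ ((p + 1).choose k : ℝ) * aeval a (bernoulli k) * y ^ (p + 1 - k)
  have hsym : aeval (a + y) (bernoulli (p + 1)) + aeval ((1 - a) + y) (bernoulli (p + 1)) =
      ∑ k ∈ range (p + 2), g k * (1 + (-1) ^ k) := by
    rw [aeval_add_bernoulli, aeval_add_bernoulli, ← sum_add_distrib]
    refine sum_congr rfl fun k _ ↦ ?_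
    rw [aeval_one_sub_bernoulli]
    ring
  have htop : g (p + 1) * (1 + (-1) ^ (p + 1)) = 2 * aeval a (bernoulli (p + 1)) := by
    have := neg_one_pow_mul_aeval_half_bernoulli hκ (n := p + 1) (by omega)
    simp only [g, Nat.choose_self, Nat.sub_self, pow_zero]
    linear_combination this
  rw [mul_add, sum_range_pow_eq_aeval_bernoulli_sub, sum_range_pow_eq_aeval_bernoulli_sub, hlow,
    hhigh]
  rw [sum_range_succ, sum_range_succ_mul_one_add_neg_one_pow, htop] at hsym
  simp only [eq_ratCast] at hsym ⊢
  linear_combination hsym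

end PowerSums

theorem sum_range_min_sub_pow {p M κ : ℕ} (hp : p ≠ 0) (hκ : κ ≤ 1) :
    ∑ d ∈ range (2 * M + κ), min d (2 * M + κ - d) ^ p =
      ∑ k ∈ range (M + κ), k ^ p + ∑ k ∈ range (M + 1), k ^ p := by
  rw [show 2 * M + κ = M + κ + M by ring, sum_range_add, sum_range_succ', zero_pow hp, add_zero]
  congr 1
  · exact sum_congr rfl fun d hd ↦ by rw [mem_range] at hd; rw [min_eq_left (by omega)]
  · rw [← sum_range_reflect]
    refine sum_congr rfl fun i hi ↦ ?_
    rw [mem_range] at hi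
    rw [min_eq_right (by omega)]
    congr 1
    omega

namespace AddCircle

variable {L : ℝ}

theorem coe_natCast_mod_mul_div (N a : ℕ) :
    (((a % N : ℕ) : ℝ) * (L / (N : ℝ)) : AddCircle L) = ((a : ℝ) * (L / (N : ℝ)) : AddCircle L) := by
  rcases N.eq_zero_or_pos with rfl | hN
  · simp
  conv_rhs => rw [← Nat.mod_add_div a N]
  rw [show ((a % N + N * (a / N) : ℕ) : ℝ) * (L / N) = (a % N : ℕ) * (L / N) + (a / N) • L by
    push_cast; field_simp; ring]
  rw [coe_add, coe_nsmul, coe_period, smul_zero, add_zero]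

theorem coe_val_mul_div_sub {N : ℕ} (j k : Fin N) :
    ((j * (L / N) : ℝ) : AddCircle L) - ((k * (L / N) : ℝ) : AddCircle L) =
      (((j - k : Fin N) : ℕ) * (L / N) : ℝ) := by
  have hN : (N : ℝ) ≠ 0 := by exact_mod_cast (Fin.pos j).ne'
  rw [Fin.val_sub, coe_natCast_mod_mul_div, ← coe_sub,
    show ((N - k + j : ℕ) : ℝ) * (L / N) = j * (L / N) - k * (L / N) + L by
      rw [Nat.cast_add, Nat.cast_sub k.isLt.le]; field_simp; ring, coe_add_period]

theorem norm_coe_natCast_mul_div (hL : 0 < L) {N d : ℕ} (hd : d ≤ N) :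
    ‖((d * (L / N) : ℝ) : AddCircle L)‖ = L / N * (min d (N - d) : ℕ) := by
  rcases N.eq_zero_or_pos with rfl | hN
  · simp
  have hN' : (0 : ℝ) < N := by exact_mod_cast hN
  have hhalf : ∀ e : ℕ, 2 * e ≤ N → ‖((e * (L / N) : ℝ) : AddCircle L)‖ = L / N * e := by
    intro e he
    have he' : (2 * e : ℝ) ≤ N := by exact_mod_cast he
    rw [mul_comm, (norm_coe_eq_abs_iff L hL.ne').2, abs_of_nonneg (by positivity)]
    rw [abs_of_nonneg (by positivity), abs_of_pos hL, div_mul_eq_mul_div,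
      div_le_div_iff₀ hN' two_pos]
    nlinarith
  rcases le_total (2 * d) N with h | h
  · rw [min_eq_left (by omega), hhalf d h]
  -- past the midpoint, `d * (L / N) ≡ -((N - d) * (L / N))` modulo `L`
  · rw [min_eq_right (by omega), ← hhalf (N - d) (by omega), ← norm_neg, ← coe_neg,
      ← coe_add_period]
    congr 2
    rw [Nat.cast_sub hd]
    field_simp
    ring

end AddCircle

theorem sum_dist_pow_equally_spaced {L : ℝ} (hL : 0 < L) {p : ℕ} (hp : p ≠ 0) (N : ℕ) :
    (∑ j : Fin N, ∑ k : Fin N, if j ≠ k then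
        dist ((((j : ℕ) : ℝ) * (L / N) : ℝ) : AddCircle L)
          ((((k : ℕ) : ℝ) * (L / N) : ℝ) : AddCircle L) ^ p else 0) =
      N * (L / N) ^ p * ∑ d ∈ range N, ((min d (N - d) : ℕ) : ℝ) ^ p := by
  have hterm : ∀ j k : Fin N, (if j ≠ k then
      dist ((((j : ℕ) : ℝ) * (L / N) : ℝ) : AddCircle L)
        ((((k : ℕ) : ℝ) * (L / N) : ℝ) : AddCircle L) ^ p else 0) =
      ‖((((j - k : Fin N) : ℕ) * (L / N) : ℝ) : AddCircle L)‖ ^ p := by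
    intro j k
    rw [← AddCircle.coe_val_mul_div_sub, ← dist_eq_norm]
    split_ifs with h
    · rfl
    · rw [not_not.1 h, dist_self, zero_pow hp]
  simp_rw [hterm]
  rcases N.eq_zero_or_pos with rfl | hN
  · simp
  have := NeZero.of_pos hN
  have hrow (j : Fin N) : ∑ k, ‖((((j - k : Fin N) : ℕ) * (L / N) : ℝ) : AddCircle L)‖ ^ p =
      ∑ d : Fin N, ‖((((d : Fin N) : ℕ) * (L / N) : ℝ) : AddCircle L)‖ ^ p :=
    (Equiv.subLeft j).sum_comp fun d ↦ ‖((((d : Fin N) : ℕ) * (L / N) : ℝ) : AddCircle L)‖ ^ p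
  rw [sum_congr rfl fun j _ ↦ hrow j, sum_const, card_univ, Fintype.card_fin, nsmul_eq_mul,
    Fin.sum_univ_eq_sum_range (fun d : ℕ ↦ ‖(((d : ℝ) * (L / N) : ℝ) : AddCircle L)‖ ^ p),
    mul_assoc]
  congr 1
  rw [mul_sum]
  refine sum_congr rfl fun d hd ↦ ?_
  rw [AddCircle.norm_coe_natCast_mul_div hL (mem_range.1 hd).le, mul_pow]

theorem mul_div_pow_eq_zpow {x : ℝ} (hx : x ≠ 0) (L : ℝ) (p : ℕ) :
    x * (L / x) ^ p = L ^ p * x ^ ((1 : ℤ) - p) := by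
  rw [zpow_sub₀ hx, zpow_one, zpow_natCast, div_pow]
  field_simp

theorem mul_div_pow_mul_half_pow {x : ℝ} (hx : x ≠ 0) (L : ℝ) {p m : ℕ} (hm : 2 * m ≤ p + 1) :
    x * (L / x) ^ p * (2 * (x / 2) ^ (p + 1 - 2 * m)) =
      (L / 2) ^ p * 2 ^ (2 * m) * x ^ ((2 : ℤ) - 2 * m) := by
  obtain ⟨r, hr⟩ := Nat.exists_eq_add_of_le hm
  rw [mul_div_pow_eq_zpow hx, hr, Nat.add_sub_cancel_left,
    show (2 : ℤ) - 2 * m = (r : ℤ) + (1 - p) by omega, zpow_add₀ hx, zpow_natCast]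
  have h2 : (2 : ℝ) ^ (p + 1) = 2 ^ (2 * m) * 2 ^ r := by rw [← pow_add, hr]
  rw [pow_succ] at h2
  rw [div_pow, div_pow]
  field_simp
  linear_combination L ^ p * h2

theorem mul_div_pow_mul_sum_half_pow {x : ℝ} (hx : x ≠ 0) (L : ℝ) {p n : ℕ}
    (hn : 2 * n ≤ p + 1) (c : ℕ → ℝ) :
    x * (L / x) ^ p * (2 * ∑ m ∈ range (n + 1), c m * (x / 2) ^ (p + 1 - 2 * m)) =
      (L / 2) ^ p * (c 0 * x ^ 2 + ∑ m ∈ Icc 1 n, c m * 2 ^ (2 * m) * x ^ ((2 : ℤ) - 2 * m)) := by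
  have hterm : ∀ m ∈ range (n + 1), x * (L / x) ^ p * (2 * (c m * (x / 2) ^ (p + 1 - 2 * m))) =
      (L / 2) ^ p * (c m * 2 ^ (2 * m) * x ^ ((2 : ℤ) - 2 * m)) := fun m hm ↦ by
    linear_combination c m * mul_div_pow_mul_half_pow hx L (p := p) (m := m)
      (by rw [mem_range] at hm; omega)
  rw [mul_sum, mul_sum, sum_congr rfl hterm, ← mul_sum, Nat.range_succ_eq_Icc_zero,
    ← insert_Icc_add_one_left_eq_Icc (Nat.zero_le n), sum_insert (by simp), zero_add]
  simp [zpow_ofNat]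


/-- **Exact formula for the geodesic Riesz `(−p)`-energy of equally spaced points**
(Proposition 11): for `N = 2M + κ ≥ 2` with `κ ∈ {0,1}`, the sum of the `p`-th powers of
the geodesic distances between the `N` equally spaced points `z_j = j·(L/N) mod L` equals
`[(L/2)^p/(p+1)]·N² + [(L/2)^p/(p+1)]·Σ_{n=1}^{⌊p/2⌋} C(p+1,2n)·B_{2n}(κ/2)·2^{2n}·N^{2−2n}
+ [2L^p/(p+1)]·(B_{p+1}(κ/2) − B_{p+1})·N^{1−p}`, the last term vanishing for even `p`. -/
theorem riesz_neg_p_energy_exact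
    (L : ℝ) (hL : 0 < L) (p : ℕ) (hp : 1 ≤ p)
    (N M κ : ℕ) (hκ : κ = 0 ∨ κ = 1) (hNM : N = 2 * M + κ) (hN : 2 ≤ N) :
    (∑ j : Fin N, ∑ k : Fin N, if j ≠ k then
        (dist ((((j : ℕ) : ℝ) * (L / N) : ℝ) : AddCircle L)
          ((((k : ℕ) : ℝ) * (L / N) : ℝ) : AddCircle L)) ^ p else 0)
      = (L / 2) ^ p / ((p : ℝ) + 1) * (N : ℝ) ^ 2
        + (L / 2) ^ p / ((p : ℝ) + 1)
          * (∑ n ∈ Finset.Icc 1 (p / 2),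
              ((p + 1).choose (2 * n) : ℝ)
                * (Polynomial.aeval ((κ : ℝ) / 2) (Polynomial.bernoulli (2 * n)))
                * 2 ^ (2 * n) * (N : ℝ) ^ ((2 : ℤ) - 2 * n))
        + 2 * L ^ p / ((p : ℝ) + 1)
          * ((Polynomial.aeval ((κ : ℝ) / 2) (Polynomial.bernoulli (p + 1)))
              - ((bernoulli (p + 1) : ℚ) : ℝ)) * (N : ℝ) ^ ((1 : ℤ) - p)
      ∧ (Even p →
          2 * L ^ p / ((p : ℝ) + 1)
            * ((Polynomial.aeval ((κ : ℝ) / 2) (Polynomial.bernoulli (p + 1)))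
                - ((bernoulli (p + 1) : ℚ) : ℝ)) * (N : ℝ) ^ ((1 : ℤ) - p) = 0) := by
  have hp0 : p ≠ 0 := by omega
  have hN0 : (N : ℝ) ≠ 0 := by exact_mod_cast (by omega : N ≠ 0)
  have hvanish : Even p → Polynomial.aeval ((κ : ℝ) / 2) (Polynomial.bernoulli (p + 1)) -
      ((bernoulli (p + 1) : ℚ) : ℝ) = 0 := fun hpe ↦ by
    rw [Polynomial.aeval_half_bernoulli_of_odd hκ hpe.add_one (by omega),
      bernoulli_eq_zero_of_odd hpe.add_one (by omega)]
    simp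
  refine ⟨?_, fun hpe ↦ by rw [hvanish hpe, mul_zero, zero_mul]⟩
  have hS : ∑ d ∈ range N, ((min d (N - d) : ℕ) : ℝ) ^ p =
      ∑ k ∈ range (M + κ), (k : ℝ) ^ p + ∑ k ∈ range (M + 1), (k : ℝ) ^ p := by
    subst hNM
    exact_mod_cast sum_range_min_sub_pow hp0 (by omega)
  have hkey := sum_range_pow_add_sum_range_pow (M := M) hp0 hκ
  rw [← hNM] at hkey
  have hrescale := mul_div_pow_mul_sum_half_pow hN0 L (p := p) (n := p / 2) (by omega)
    fun m ↦ ((p + 1).choose (2 * m) : ℝ) *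
      Polynomial.aeval ((κ : ℝ) / 2) (Polynomial.bernoulli (2 * m))
  simp only [mul_zero, Nat.choose_zero_right, Polynomial.bernoulli_zero, map_one, Nat.cast_one,
    one_mul] at hrescale
  rw [sum_dist_pow_equally_spaced hL hp0, hS,
    eq_div_of_mul_eq (by positivity) ((mul_comm _ _).trans hkey)]
  linear_combination ((p : ℝ) + 1)⁻¹ * (hrescale + 2 * (Polynomial.aeval ((κ : ℝ) / 2)
    (Polynomial.bernoulli (p + 1)) - ((bernoulli (p + 1) : ℚ) : ℝ)) * mul_div_pow_eq_zpow hN0 L p)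
end
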